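/- arXiv:1804.10282 — 5 statements merged into one kernel-verified Lean document; each statement's English description precedes it below -/
import Mathlib

section
/- Let n ≥ 1, let Ω ⊂ ℝⁿ be a bounded measurable set and let δ > 0 satisfy ‖x − y‖ ≤ δ for all x, y ∈ Ω. Let k : (0,∞) → [0,∞) be measurable with C := 2·∫_{{z ∈ ℝⁿ : ‖z‖ > δ}} k(‖z‖) dz < ∞. Let u, v ∈ L²(ℝⁿ) vanish almost everywhere outside Ω, and assume that (x,y) ↦ (u(y) − u(x))(v(y) − v(x))·k(‖x − y‖)·1_{‖x−y‖ ≤ δ} is integrable on ℝⁿ × ℝⁿ. Then (x,y) ↦ (u(y) − u(x))(v(y) − v(x))·k(‖x − y‖) is integrable on ℝⁿ × ℝⁿ and ∫_{ℝⁿ}∫_{ℝⁿ} (u(y) − u(x))(v(y) − v(x)) k(‖x − y‖) dy dx = ∫_{ℝⁿ}∫_{ℝⁿ} 1_{‖x−y‖ ≤ δ} (u(y) − u(x))(v(y) − v(x)) k(‖x − y‖) dy dx + C·∫_Ω u(x) v(x) dx. -/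
open MeasureTheory

/-- Proposition 3.1 (splitting identity): for a radial kernel integrable outside the
ball of radius `δ`, and `u, v ∈ L²` supported in a set `Ω` of diameter at most `δ`,
the full nonlocal bilinear form equals the truncated one plus `C · ∫_Ω u v`. -/
theorem splitting_identity
    (n : ℕ) (hn : 1 ≤ n)
    (Ω : Set (EuclideanSpace ℝ (Fin n))) (hΩmeas : MeasurableSet Ω)
    (hΩbdd : Bornology.IsBounded Ω)
    (δ : ℝ) (hδ : 0 < δ)
    (hdiam : ∀ x ∈ Ω, ∀ y ∈ Ω, ‖x - y‖ ≤ δ)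
    (k : ℝ → ℝ) (hkmeas : Measurable k) (hknn : ∀ t : ℝ, 0 < t → 0 ≤ k t)
    (hktail : IntegrableOn (fun z : EuclideanSpace ℝ (Fin n) => k ‖z‖)
      {z : EuclideanSpace ℝ (Fin n) | δ < ‖z‖} volume)
    (u v : EuclideanSpace ℝ (Fin n) → ℝ)
    (hu : MemLp u 2 volume) (hv : MemLp v 2 volume)
    (hu0 : ∀ᵐ x : EuclideanSpace ℝ (Fin n) ∂volume, x ∉ Ω → u x = 0)
    (hv0 : ∀ᵐ x : EuclideanSpace ℝ (Fin n) ∂volume, x ∉ Ω → v x = 0)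
    (htrunc : Integrable
      (fun p : EuclideanSpace ℝ (Fin n) × EuclideanSpace ℝ (Fin n) =>
        if ‖p.1 - p.2‖ ≤ δ then (u p.2 - u p.1) * (v p.2 - v p.1) * k ‖p.1 - p.2‖ else 0)
      (volume.prod volume)) :
    Integrable
      (fun p : EuclideanSpace ℝ (Fin n) × EuclideanSpace ℝ (Fin n) =>
        (u p.2 - u p.1) * (v p.2 - v p.1) * k ‖p.1 - p.2‖) (volume.prod volume) ∧
    (∫ x : EuclideanSpace ℝ (Fin n), ∫ y : EuclideanSpace ℝ (Fin n),
        (u y - u x) * (v y - v x) * k ‖x - y‖)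
      = (∫ x : EuclideanSpace ℝ (Fin n), ∫ y : EuclideanSpace ℝ (Fin n),
          if ‖x - y‖ ≤ δ then (u y - u x) * (v y - v x) * k ‖x - y‖ else 0)
        + (2 * ∫ z in {z : EuclideanSpace ℝ (Fin n) | δ < ‖z‖}, k ‖z‖)
          * ∫ x in Ω, u x * v x := by
  classical
  -- the far-range kernel
  set K : EuclideanSpace ℝ (Fin n) → ℝ := fun z => if δ < ‖z‖ then k ‖z‖ else 0 with hK
  have hsmeas : MeasurableSet {z : EuclideanSpace ℝ (Fin n) | δ < ‖z‖} :=
    measurableSet_lt measurable_const measurable_norm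
  have hKeq : K = Set.indicator {z : EuclideanSpace ℝ (Fin n) | δ < ‖z‖} (fun z => k ‖z‖) := by
    funext z; simp [hK, Set.indicator_apply]
  have hKmeas : Measurable K :=
    Measurable.ite hsmeas (hkmeas.comp measurable_norm) measurable_const
  have hKint : Integrable K volume := by
    rw [hKeq]; exact (integrable_indicator_iff hsmeas).2 hktail
  have hKsymm : ∀ a b : EuclideanSpace ℝ (Fin n), K (b - a) = K (a - b) := by
    intro a b; simp [hK, norm_sub_rev]
  -- the product uv
  set w : EuclideanSpace ℝ (Fin n) → ℝ := fun x => u x * v x with hwdef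
  have hw : Integrable w volume := by
    have h2 : (1 : ENNReal) / 1 = 1 / 2 + 1 / 2 := by
      rw [ENNReal.div_self one_ne_zero ENNReal.one_ne_top]
      exact (ENNReal.add_halves 1).symm
    have h := hv.smul (φ := u) (r := 1) hu (hpqr := ⟨by rw [ENNReal.inv_two_add_inv_two, inv_one]⟩)
    exact memLp_one_iff_integrable.1 h
  -- the two far-range pieces
  set G : EuclideanSpace ℝ (Fin n) × EuclideanSpace ℝ (Fin n) → ℝ :=
    fun p => w p.1 * K (p.1 - p.2) with hGdef
  set H : EuclideanSpace ℝ (Fin n) × EuclideanSpace ℝ (Fin n) → ℝ :=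
    fun p => w p.2 * K (p.1 - p.2) with hHdef
  have hGmeas : AEStronglyMeasurable G ((volume : Measure (EuclideanSpace ℝ (Fin n))).prod volume) :=
    (hw.aestronglyMeasurable.comp_quasiMeasurePreserving
        Measure.quasiMeasurePreserving_fst).mul
      ((hKmeas.comp (measurable_fst.sub measurable_snd)).aestronglyMeasurable)
  have hGint : Integrable G (volume.prod volume) := by
    rw [integrable_prod_iff hGmeas]
    constructor
    · exact Filter.Eventually.of_forall fun x => (hKint.comp_sub_left x).const_mul (w x)
    · have heq : (fun x => ∫ y, ‖G (x, y)‖) = fun x => ‖w x‖ * ∫ y, ‖K y‖ := by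
        funext x
        simp_rw [hGdef, norm_mul]
        rw [integral_const_mul]
        congr 1
        exact integral_sub_left_eq_self (fun y => ‖K y‖) volume x
      rw [heq]
      exact hw.norm.mul_const _
  have hHswap : H = G ∘ Prod.swap := by
    funext p; simp [hGdef, hHdef, hKsymm]
  have hHint : Integrable H (volume.prod volume) := by rw [hHswap]; exact hGint.swap
  -- the truncated and full integrands
  set N : EuclideanSpace ℝ (Fin n) × EuclideanSpace ℝ (Fin n) → ℝ := fun p =>
    if ‖p.1 - p.2‖ ≤ δ then (u p.2 - u p.1) * (v p.2 - v p.1) * k ‖p.1 - p.2‖ else 0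
    with hNdef
  set F : EuclideanSpace ℝ (Fin n) × EuclideanSpace ℝ (Fin n) → ℝ := fun p =>
    (u p.2 - u p.1) * (v p.2 - v p.1) * k ‖p.1 - p.2‖ with hFdef
  -- a.e. decomposition F = N + G + H
  have hae : F =ᵐ[(volume : Measure (EuclideanSpace ℝ (Fin n))).prod volume]
      fun p => N p + G p + H p := by
    have h1 := (Measure.quasiMeasurePreserving_fst
      (μ := (volume : Measure (EuclideanSpace ℝ (Fin n))))
      (ν := (volume : Measure (EuclideanSpace ℝ (Fin n))))).ae hu0
    have h2 := (Measure.quasiMeasurePreserving_snd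
      (μ := (volume : Measure (EuclideanSpace ℝ (Fin n))))
      (ν := (volume : Measure (EuclideanSpace ℝ (Fin n))))).ae hu0
    have h3 := (Measure.quasiMeasurePreserving_fst
      (μ := (volume : Measure (EuclideanSpace ℝ (Fin n))))
      (ν := (volume : Measure (EuclideanSpace ℝ (Fin n))))).ae hv0
    have h4 := (Measure.quasiMeasurePreserving_snd
      (μ := (volume : Measure (EuclideanSpace ℝ (Fin n))))
      (ν := (volume : Measure (EuclideanSpace ℝ (Fin n))))).ae hv0
    filter_upwards [h1, h2, h3, h4] with p hu1 hu2 hv1 hv2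
    by_cases hle : ‖p.1 - p.2‖ ≤ δ
    · simp [hFdef, hNdef, hGdef, hHdef, hK, hle, not_lt.2 hle]
    · have hfar : δ < ‖p.1 - p.2‖ := lt_of_not_ge hle
      simp only [hFdef, hNdef, hGdef, hHdef, hK, hwdef, if_neg hle, if_pos hfar, zero_add]
      rcases Classical.em (p.1 ∈ Ω) with ha | ha
      · have hb : p.2 ∉ Ω := fun hb => hle (hdiam p.1 ha p.2 hb)
        rw [hu2 hb, hv2 hb]; ring
      · rw [hu1 ha, hv1 ha]
        rcases Classical.em (p.2 ∈ Ω) with hb | hb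
        · ring
        · rw [hu2 hb, hv2 hb]; ring
  have h12 : Integrable (fun p => N p + G p) (volume.prod volume) := htrunc.add hGint
  have h123 : Integrable (fun p => N p + G p + H p) (volume.prod volume) := h12.add hHint
  have hFint : Integrable F (volume.prod volume) := h123.congr hae.symm
  refine ⟨hFint, ?_⟩
  -- compute the integrals
  have hwsupp : ∫ x, w x = ∫ x in Ω, u x * v x := by
    rw [← integral_add_compl hΩmeas hw]
    have hzero : ∫ x in Ωᶜ, w x = 0 := by
      apply setIntegral_eq_zero_of_ae_eq_zero
      filter_upwards [hu0] with x hx hxc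
      show u x * v x = 0
      rw [hx hxc, zero_mul]
    rw [hzero, add_zero]
  have hKval : ∫ z, K z = ∫ z in {z : EuclideanSpace ℝ (Fin n) | δ < ‖z‖}, k ‖z‖ := by
    rw [hKeq, integral_indicator hsmeas]
  have hGval : ∫ p, G p ∂(volume.prod volume)
      = (∫ z in {z : EuclideanSpace ℝ (Fin n) | δ < ‖z‖}, k ‖z‖) * ∫ x in Ω, u x * v x := by
    rw [integral_prod _ hGint]
    have hinner : (fun x => ∫ y, G (x, y)) = fun x => w x * ∫ z, K z := by
      funext x
      simp_rw [hGdef]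
      rw [integral_const_mul]
      congr 1
      exact integral_sub_left_eq_self K volume x
    rw [hinner, integral_mul_const, hwsupp, hKval, mul_comm]
  have hHval : ∫ p, H p ∂(volume.prod volume) = ∫ p, G p ∂(volume.prod volume) := by
    rw [hHswap]
    exact integral_prod_swap G
  have key : ∫ p, F p ∂(volume.prod volume) = (∫ p, N p ∂(volume.prod volume))
      + (2 * ∫ z in {z : EuclideanSpace ℝ (Fin n) | δ < ‖z‖}, k ‖z‖) * ∫ x in Ω, u x * v x := by
    rw [integral_congr_ae hae, integral_add h12 hHint, integral_add htrunc hGint, hHval, hGval]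
    ring
  rw [integral_prod _ hFint, integral_prod _ htrunc] at key
  exact key
end

section
/- Let X be a real normed vector space, let K ⊆ X be a convex set, and let A : X → X* be a map into the continuous dual of X such that: (i) A is monotone on K, i.e. (A(v) − A(w))(v − w) ≥ 0 for all v, w ∈ K; and (ii) A is hemicontinuous along segments in K, i.e. for all v, w ∈ K the map t ↦ A(v + t·(w − v))(w − v) is continuous on the interval [0,1]. Then, for u ∈ K, the following are equivalent: (a) A(u)(v − u) ≥ 0 for all v ∈ K; (b) A(v)(v − u) ≥ 0 for all v ∈ K. -/
/-!
Monotonicity gives `A u (v - u) ≤ A v (v - u)`, so the variational inequality implies its Minty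
form. Conversely, testing the Minty form at `u + t • (v - u) ∈ K` and dividing by `t > 0` gives
`0 ≤ A (u + t • (v - u)) (v - u)` for `t ∈ (0, 1]`; hemicontinuity lets `t → 0`.
-/

section Minty

variable {X : Type*} [AddCommGroup X] [Module ℝ X] [TopologicalSpace X]
  {K : Set X} {A : X → (X →L[ℝ] ℝ)} {u v : X}

theorem apply_sub_le_apply_sub_of_monotone
    (hmono : ∀ v ∈ K, ∀ w ∈ K, 0 ≤ (A v - A w) (v - w)) (hu : u ∈ K) (hv : v ∈ K) :
    A u (v - u) ≤ A v (v - u) := by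
  simpa only [sub_apply, sub_nonneg] using hmono v hv u hu

theorem nonneg_apply_add_smul_of_minty (hK : Convex ℝ K) (hu : u ∈ K) (hv : v ∈ K)
    (hminty : ∀ w ∈ K, 0 ≤ A w (w - u)) {t : ℝ} (ht : t ∈ Set.Ioc 0 1) :
    0 ≤ A (u + t • (v - u)) (v - u) := by
  have hmem : u + t • (v - u) ∈ K := hK.add_smul_sub_mem hu hv (Set.Ioc_subset_Icc_self ht)
  have hscaled : 0 ≤ t * A (u + t • (v - u)) (v - u) := by
    simpa only [add_sub_cancel_left, map_smul, smul_eq_mul] using hminty _ hmem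
  exact nonneg_of_mul_nonneg_right hscaled ht.1

theorem ContinuousOn.nonneg_left_of_nonneg_Ioc {f : ℝ → ℝ} {a b : ℝ}
    (hf : ContinuousOn f (Set.Icc a b)) (hab : a < b) (hpos : ∀ t ∈ Set.Ioc a b, 0 ≤ f t) :
    0 ≤ f a := by
  rw [← closure_Ioc hab.ne] at hf
  exact le_on_closure hpos continuousOn_const hf (by simp [closure_Ioc hab.ne, hab.le])

end Minty

/-- Minty's Lemma (Lemma 4.2): for a monotone operator `A : X → X*` that is
hemicontinuous along segments in a convex set `K`, the variational inequality
`A(u)(v - u) ≥ 0` on `K` is equivalent to its Minty form `A(v)(v - u) ≥ 0`. -/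
theorem minty_lemma
    {X : Type*} [NormedAddCommGroup X] [NormedSpace ℝ X]
    (K : Set X) (hK : Convex ℝ K)
    (A : X → (X →L[ℝ] ℝ))
    (hmono : ∀ v ∈ K, ∀ w ∈ K, 0 ≤ (A v - A w) (v - w))
    (hhemi : ∀ v ∈ K, ∀ w ∈ K,
      ContinuousOn (fun t : ℝ => A (v + t • (w - v)) (w - v)) (Set.Icc (0 : ℝ) 1))
    (u : X) (hu : u ∈ K) :
    (∀ v ∈ K, 0 ≤ A u (v - u)) ↔ (∀ v ∈ K, 0 ≤ A v (v - u)) := by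
  refine ⟨fun h v hv => (h v hv).trans (apply_sub_le_apply_sub_of_monotone hmono hu hv),
    fun h v hv => ?_⟩
  simpa using (hhemi u hu v hv).nonneg_left_of_nonneg_Ioc zero_lt_one
    fun t ht => nonneg_apply_add_smul_of_minty hK hu hv h ht
end

section
/- Let V be a real Hilbert space with inner product ⟨·,·⟩, let K ⊆ V be a convex set, let f : V → ℝ be a continuous linear functional, and let b : V × V → ℝ be a continuous bilinear form. Suppose u₁ ∈ K satisfies ⟨u₁, v − u₁⟩ + b(u₁, v − u₁) ≥ f(v − u₁) for all v ∈ K, and u₂ ∈ K satisfies ⟨u₂, v − u₂⟩ ≥ f(v − u₂) for all v ∈ K. Then ‖u₁ − u₂‖ ≤ ‖b(u₁, ·)‖, where ‖b(u₁, ·)‖ denotes the operator norm of the continuous linear functional w ↦ b(u₁, w) on V. -/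
/-- The abstract perturbation estimate underlying Proposition 4.1: if `u₁` solves the
variational inequality for the inner product perturbed by a continuous bilinear form
`b`, and `u₂` solves the unperturbed one, then `‖u₁ - u₂‖ ≤ ‖b(u₁, ·)‖`. -/
theorem perturbed_variational_inequality_estimate
    {V : Type*} [NormedAddCommGroup V] [InnerProductSpace ℝ V]
    (K : Set V) (hK : Convex ℝ K)
    (f : V →L[ℝ] ℝ) (b : V →L[ℝ] V →L[ℝ] ℝ)
    (u₁ u₂ : V) (hu₁ : u₁ ∈ K) (hu₂ : u₂ ∈ K)
    (h₁ : ∀ v ∈ K, f (v - u₁) ≤ (inner ℝ u₁ (v - u₁) : ℝ) + b u₁ (v - u₁))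
    (h₂ : ∀ v ∈ K, f (v - u₂) ≤ (inner ℝ u₂ (v - u₂) : ℝ)) :
    ‖u₁ - u₂‖ ≤ ‖b u₁‖ := by
  have A := h₁ u₂ hu₂
  have B := h₂ u₁ hu₁
  have hsum : (0:ℝ) ≤ inner ℝ u₁ (u₂ - u₁) + b u₁ (u₂ - u₁) + inner ℝ u₂ (u₁ - u₂) := by
    have : f (u₂ - u₁) + f (u₁ - u₂) = 0 := by
      rw [← map_add]; simp
    linarith
  have key : ‖u₁ - u₂‖^2 ≤ b u₁ (u₂ - u₁) := by
    have h1 : (inner ℝ u₁ (u₂ - u₁) : ℝ) + inner ℝ u₂ (u₁ - u₂) = - ‖u₁ - u₂‖^2 := by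
      have : (inner ℝ u₁ (u₂ - u₁) : ℝ) + inner ℝ u₂ (u₁ - u₂)
          = - inner ℝ (u₁ - u₂) (u₁ - u₂) := by
        simp [inner_sub_left, inner_sub_right, real_inner_comm u₁ u₂]; rw [norm_sub_sq_real]; ring
      rw [this, real_inner_self_eq_norm_sq]
    linarith
  have hb : b u₁ (u₂ - u₁) ≤ ‖b u₁‖ * ‖u₁ - u₂‖ := by
    calc b u₁ (u₂ - u₁) ≤ ‖b u₁ (u₂ - u₁)‖ := le_abs_self _
      _ ≤ ‖b u₁‖ * ‖u₂ - u₁‖ := (b u₁).le_opNorm _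
      _ = ‖b u₁‖ * ‖u₁ - u₂‖ := by rw [norm_sub_rev]
  rcases eq_or_lt_of_le (norm_nonneg (u₁ - u₂)) with h | h
  · rw [← h]; exact norm_nonneg _
  · have : ‖u₁ - u₂‖ * ‖u₁ - u₂‖ ≤ ‖b u₁‖ * ‖u₁ - u₂‖ := by
      nlinarith
    exact le_of_mul_le_mul_right this h
end

section
/- Let D ⊆ ℝⁿ be a bounded measurable set and let γ : ℝⁿ × ℝⁿ → ℝ be measurable, symmetric (γ(x,y) = γ(y,x)), nonnegative, and such that ∫_D γ(x,y)² dy ≤ γ₄² for a.e. x ∈ D, for some constant γ₄ > 0. For v ∈ L²(D) define (−Lv)(x) := 2∫_D (v(x) − v(y)) γ(x,y) dy. Then for all u, v ∈ L²(D), ∫_D ∫_D (u(x) − u(y))(v(x) − v(y)) γ(x,y) dy dx = ∫_D (−Lu)(x) · v(x) dx, all integrals being absolutely convergent. -/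
/-!
Write `W(x, y) = (u x - u y) γ(x, y)`. The uniform `L²` bound on the rows of `γ` puts
`(x, y) ↦ u x γ(x, y)` in `L²(D × D)`, and by symmetry of `γ` so is `(x, y) ↦ u y γ(x, y)`; hence
`W ∈ L²(D × D)`. On the finite measure space `D × D` the functions `v x` and `v y` are in `L²` too,
so Hölder's inequality makes `W(x, y) v(x)` and `W(x, y) v(y)` integrable, and Fubini applies to
every integral in the statement. Finally `W` is antisymmetric, so swapping the variables turns
`∫∫ W(x, y) v(y)` into `-∫∫ W(x, y) v(x)`, and the double integral equals `2 ∫∫ W(x, y) v(x)`.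
-/

open MeasureTheory

/-- The nonlocal diffusion operator `-L`. -/
noncomputable def negNonlocalDiffusion {α : Type*} [MeasurableSpace α] (μ : Measure α)
    (κ : α → α → ℝ) (u : α → ℝ) (x : α) : ℝ :=
  2 * ∫ y, (u x - u y) * κ x y ∂μ

section SymmetricKernel

variable {α : Type*} [MeasurableSpace α] {μ : Measure α} {κ : α → α → ℝ} {c : ℝ} {u v : α → ℝ}

theorem integral_sub_mul_kernel_mul_snd [SFinite μ] (hsymm : ∀ x y, κ x y = κ y x) :
    ∫ p : α × α, (u p.1 - u p.2) * κ p.1 p.2 * v p.2 ∂(μ.prod μ)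
      = -∫ p : α × α, (u p.1 - u p.2) * κ p.1 p.2 * v p.1 ∂(μ.prod μ) := by
  rw [← integral_prod_swap, ← integral_neg]
  congr! 2 with p
  rw [Prod.fst_swap, Prod.snd_swap, hsymm]
  ring

variable (hκ : Measurable fun p : α × α => κ p.1 p.2)
  (hrow : ∀ᵐ x ∂μ, ∫⁻ y, ENNReal.ofReal (κ x y ^ 2) ∂μ ≤ ENNReal.ofReal (c ^ 2))
include hκ hrow

theorem MeasureTheory.MemLp.mul_kernel [SFinite μ] (hu : MemLp u 2 μ) :
    MemLp (fun p : α × α => u p.1 * κ p.1 p.2) 2 (μ.prod μ) := by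
  have hmeas : AEStronglyMeasurable (fun p : α × α => u p.1 * κ p.1 p.2) (μ.prod μ) :=
    hu.1.comp_fst.mul hκ.aestronglyMeasurable
  refine (memLp_two_iff_integrable_sq hmeas).2 ⟨hmeas.pow 2, ?_⟩
  rw [hasFiniteIntegral_iff_ofReal (.of_forall fun p => sq_nonneg _),
    lintegral_prod (fun p : α × α => ENNReal.ofReal ((u p.1 * κ p.1 p.2) ^ 2))
      (hmeas.pow 2).aemeasurable.ennreal_ofReal]
  calc ∫⁻ x, ∫⁻ y, ENNReal.ofReal ((u x * κ x y) ^ 2) ∂μ ∂μ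
      = ∫⁻ x, ENNReal.ofReal (u x ^ 2) * ∫⁻ y, ENNReal.ofReal (κ x y ^ 2) ∂μ ∂μ := by
        congr! 2 with x
        simp_rw [mul_pow, ENNReal.ofReal_mul (sq_nonneg _)]
        exact lintegral_const_mul' _ _ ENNReal.ofReal_ne_top
    _ ≤ ∫⁻ x, ENNReal.ofReal (u x ^ 2) * ENNReal.ofReal (c ^ 2) ∂μ :=
        lintegral_mono_ae (hrow.mono fun x hx => mul_le_mul_right hx _)
    _ < ⊤ := by
        rw [lintegral_mul_const' _ _ ENNReal.ofReal_ne_top]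
        exact ENNReal.mul_lt_top hu.integrable_sq.lintegral_lt_top ENNReal.ofReal_lt_top

theorem MeasureTheory.MemLp.sub_mul_kernel [SFinite μ] (hsymm : ∀ x y, κ x y = κ y x)
    (hu : MemLp u 2 μ) :
    MemLp (fun p : α × α => (u p.1 - u p.2) * κ p.1 p.2) 2 (μ.prod μ) := by
  have hfst := hu.mul_kernel hκ hrow
  have hsnd : MemLp (fun p : α × α => u p.2 * κ p.1 p.2) 2 (μ.prod μ) := by
    convert hfst.comp_measurePreserving Measure.measurePreserving_swap using 2 with p
    simp only [Function.comp_apply, Prod.fst_swap, Prod.snd_swap, hsymm p.1 p.2]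
  convert hfst.sub hsnd using 1
  funext p
  exact sub_mul (u p.1) (u p.2) (κ p.1 p.2)

variable [IsFiniteMeasure μ] (hsymm : ∀ x y, κ x y = κ y x) (hu : MemLp u 2 μ)
  (hv : MemLp v 2 μ)
include hsymm hu

theorem ae_integrable_sub_mul_kernel :
    ∀ᵐ x ∂μ, Integrable (fun y => (u x - u y) * κ x y) μ :=
  ((hu.sub_mul_kernel hκ hrow hsymm).integrable one_le_two).prod_right_ae

include hv

theorem integrable_sub_mul_kernel_mul_fst :
    Integrable (fun p : α × α => (u p.1 - u p.2) * κ p.1 p.2 * v p.1) (μ.prod μ) :=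
  (hu.sub_mul_kernel hκ hrow hsymm).integrable_mul (hv.comp_fst μ)

theorem integrable_sub_mul_kernel_mul_snd :
    Integrable (fun p : α × α => (u p.1 - u p.2) * κ p.1 p.2 * v p.2) (μ.prod μ) :=
  (hu.sub_mul_kernel hκ hrow hsymm).integrable_mul (hv.comp_snd μ)

theorem integrable_sub_mul_sub_mul_kernel :
    Integrable (fun p : α × α => (u p.1 - u p.2) * (v p.1 - v p.2) * κ p.1 p.2) (μ.prod μ) := by
  convert (integrable_sub_mul_kernel_mul_fst hκ hrow hsymm hu hv).sub
    (integrable_sub_mul_kernel_mul_snd hκ hrow hsymm hu hv) using 1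
  funext p
  simp only [Pi.sub_apply]
  ring

theorem integrable_negNonlocalDiffusion_mul :
    Integrable (fun x => negNonlocalDiffusion μ κ u x * v x) μ := by
  have := ((integrable_sub_mul_kernel_mul_fst hκ hrow hsymm hu hv).integral_prod_left).const_mul 2
  simp only [integral_mul_const] at this
  simpa only [negNonlocalDiffusion, mul_assoc] using this

theorem integral_integral_sub_mul_sub_mul_kernel :
    ∫ x, ∫ y, (u x - u y) * (v x - v y) * κ x y ∂μ ∂μ
      = ∫ x, negNonlocalDiffusion μ κ u x * v x ∂μ := by
  have hfst := integrable_sub_mul_kernel_mul_fst hκ hrow hsymm hu hv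
  calc ∫ x, ∫ y, (u x - u y) * (v x - v y) * κ x y ∂μ ∂μ
      = ∫ p : α × α, (u p.1 - u p.2) * κ p.1 p.2 * v p.1 ∂(μ.prod μ)
          - ∫ p : α × α, (u p.1 - u p.2) * κ p.1 p.2 * v p.2 ∂(μ.prod μ) := by
        rw [← integral_prod _ (integrable_sub_mul_sub_mul_kernel hκ hrow hsymm hu hv),
          ← integral_sub hfst (integrable_sub_mul_kernel_mul_snd hκ hrow hsymm hu hv)]
        congr! 2 with p
        ring
    _ = 2 * ∫ p : α × α, (u p.1 - u p.2) * κ p.1 p.2 * v p.1 ∂(μ.prod μ) := by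
        rw [integral_sub_mul_kernel_mul_snd hsymm]
        ring
    _ = ∫ x, negNonlocalDiffusion μ κ u x * v x ∂μ := by
        rw [integral_prod _ hfst, ← integral_const_mul]
        congr! 2
        dsimp only
        rw [negNonlocalDiffusion, integral_mul_const, mul_assoc]

end SymmetricKernel

theorem nonlocal_green_identity_general
    (n : ℕ) (D : Set (EuclideanSpace ℝ (Fin n)))
    (hDbdd : Bornology.IsBounded D)
    (γ : EuclideanSpace ℝ (Fin n) → EuclideanSpace ℝ (Fin n) → ℝ)
    (hγmeas : Measurable
      fun p : EuclideanSpace ℝ (Fin n) × EuclideanSpace ℝ (Fin n) => γ p.1 p.2)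
    (hγsymm : ∀ x y, γ x y = γ y x)
    (γ₄ : ℝ)
    (hγL2 : ∀ᵐ x ∂(volume.restrict D),
      ∫⁻ y in D, ENNReal.ofReal ((γ x y) ^ 2) ≤ ENNReal.ofReal (γ₄ ^ 2))
    (u v : EuclideanSpace ℝ (Fin n) → ℝ)
    (hu : MemLp u 2 (volume.restrict D)) (hv : MemLp v 2 (volume.restrict D)) :
    IntegrableOn
      (fun p : EuclideanSpace ℝ (Fin n) × EuclideanSpace ℝ (Fin n) =>
        (u p.1 - u p.2) * (v p.1 - v p.2) * γ p.1 p.2) (D ×ˢ D) (volume.prod volume) ∧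
    (∀ᵐ x ∂(volume.restrict D), IntegrableOn (fun y => (u x - u y) * γ x y) D volume) ∧
    IntegrableOn (fun x => (2 * ∫ y in D, (u x - u y) * γ x y) * v x) D volume ∧
    (∫ x in D, ∫ y in D, (u x - u y) * (v x - v y) * γ x y)
      = ∫ x in D, (2 * ∫ y in D, (u x - u y) * γ x y) * v x := by
  have : IsFiniteMeasure (volume.restrict D) := ⟨by simpa using hDbdd.measure_lt_top⟩
  refine ⟨?_, ae_integrable_sub_mul_kernel hγmeas hγL2 hγsymm hu,
    integrable_negNonlocalDiffusion_mul hγmeas hγL2 hγsymm hu hv,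
    integral_integral_sub_mul_sub_mul_kernel hγmeas hγL2 hγsymm hu hv⟩
  rw [IntegrableOn, ← Measure.prod_restrict]
  exact integrable_sub_mul_sub_mul_kernel hγmeas hγL2 hγsymm hu hv

/-- The nonlocal Green's first identity for square-integrable kernels (Case 2): with
`(-Lv)(x) = 2∫_D (v(x) - v(y)) γ(x,y) dy`, one has
`∫_D∫_D (u(x)-u(y))(v(x)-v(y)) γ(x,y) dy dx = ∫_D (-Lu)(x) v(x) dx`,
all integrals being absolutely convergent. -/
theorem nonlocal_green_identity
    (n : ℕ) (D : Set (EuclideanSpace ℝ (Fin n))) (hD : MeasurableSet D)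
    (hDbdd : Bornology.IsBounded D)
    (γ : EuclideanSpace ℝ (Fin n) → EuclideanSpace ℝ (Fin n) → ℝ)
    (hγmeas : Measurable
      fun p : EuclideanSpace ℝ (Fin n) × EuclideanSpace ℝ (Fin n) => γ p.1 p.2)
    (hγsymm : ∀ x y, γ x y = γ y x) (hγnn : ∀ x y, 0 ≤ γ x y)
    (γ₄ : ℝ) (hγ₄ : 0 < γ₄)
    (hγL2 : ∀ᵐ x ∂(volume.restrict D),
      ∫⁻ y in D, ENNReal.ofReal ((γ x y) ^ 2) ≤ ENNReal.ofReal (γ₄ ^ 2))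
    (u v : EuclideanSpace ℝ (Fin n) → ℝ)
    (hu : MemLp u 2 (volume.restrict D)) (hv : MemLp v 2 (volume.restrict D)) :
    IntegrableOn
      (fun p : EuclideanSpace ℝ (Fin n) × EuclideanSpace ℝ (Fin n) =>
        (u p.1 - u p.2) * (v p.1 - v p.2) * γ p.1 p.2) (D ×ˢ D) (volume.prod volume) ∧
    (∀ᵐ x ∂(volume.restrict D), IntegrableOn (fun y => (u x - u y) * γ x y) D volume) ∧
    IntegrableOn (fun x => (2 * ∫ y in D, (u x - u y) * γ x y) * v x) D volume ∧
    (∫ x in D, ∫ y in D, (u x - u y) * (v x - v y) * γ x y)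
      = ∫ x in D, (2 * ∫ y in D, (u x - u y) * γ x y) * v x :=
  nonlocal_green_identity_general n D hDbdd γ hγmeas hγsymm γ₄ hγL2 u v hu hv
end

section
/- Let D ⊆ ℝⁿ be a bounded measurable set and Ω ⊆ D measurable. Let γ : ℝⁿ × ℝⁿ → ℝ be measurable, symmetric, nonnegative, with ∫_D γ(x,y)² dy ≤ γ₄² for a.e. x ∈ D. For v ∈ L²(D) define (−Lv)(x) := 2∫_D (v(x) − v(y)) γ(x,y) dy and the nonlocal bilinear form a(u,v) := ∫_D∫_D (u(x) − u(y))(v(x) − v(y)) γ(x,y) dy dx. Let V₀ := {v ∈ L²(D) : v = 0 a.e. on D∖Ω} and assume coercivity: there is α > 0 with a(v,v) ≥ α‖v‖²_{L²(D)} for all v ∈ V₀. Let f ∈ L²(D), let ψ ∈ L²(D) with ψ ≤ 0 a.e. on D∖Ω, and set K := {v ∈ V₀ : v ≥ ψ a.e. on Ω}. Suppose u ∈ K satisfies the variational inequality a(u, v − u) ≥ ∫_D f·(v − u) dx for all v ∈ K. Then almost everywhere on Ω one has 0 ≤ (−Lu)(x) − f(x) ≤ ((−Lψ)(x) − f(x))⁺,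 where t⁺ := max(t, 0). -/
/-!
Write `λ := -Lu - f`. Since `γ` is symmetric, swapping `x` and `y` in the half of `a(u, φ)` that
contains `φ y` gives Green's formula `a(u, φ) = ∫ (-Lu) φ`, so the variational inequality says
`∫ λ (v - u) ≥ 0` for every `v ∈ K`. Testing with `v = u + 𝟙_E`, `E ⊆ Ω`, gives `λ ≥ 0` on `Ω`;
testing with `v = 𝟙_Ω ψ` gives `∫ λ (ψ - u) ≥ 0` for a nonpositive integrand, hence the
complementarity `λ (ψ - u) = 0`. Where `λ ≠ 0`, `u` touches the obstacle, and as `ψ ≤ u` a.e.,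
`(-Lu)(x) ≤ (-Lψ)(x)` there.

All integrals converge because the rows of `γ` are uniformly bounded in `L¹` (by the `L²` bound on a
set of finite measure), which by AM–GM makes `g(x) h(y) γ(x, y)` integrable for `g, h ∈ L²`.
-/

open MeasureTheory
open scoped ENNReal

noncomputable section

namespace NonlocalObstacle

variable {X : Type*} [MeasurableSpace X] {μ : Measure X} {γ : X → X → ℝ} {u φ ψ f ℓ : X → ℝ}
  {Ω : Set X}

/-- The operator written `-L` in the paper. -/
def nonlocalOp (μ : Measure X) (γ : X → X → ℝ) (u : X → ℝ) (x : X) : ℝ :=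
  2 * ∫ y, (u x - u y) * γ x y ∂μ

def nonlocalForm (μ : Measure X) (γ : X → X → ℝ) (u v : X → ℝ) : ℝ :=
  ∫ x, ∫ y, (u x - u y) * (v x - v y) * γ x y ∂μ ∂μ

/-- With `μ` the Lebesgue measure on `D`, the complement `Ωᶜ` stands for the paper's `D ∖ Ω`. -/
def obstacleSet (μ : Measure X) (Ω : Set X) (ψ : X → ℝ) : Set (X → ℝ) :=
  {v | MemLp v 2 μ ∧ (∀ᵐ x ∂μ.restrict Ωᶜ, v x = 0) ∧ ∀ᵐ x ∂μ.restrict Ω, ψ x ≤ v x}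

def IsObstacleSolution (μ : Measure X) (γ : X → X → ℝ) (Ω : Set X) (ψ f u : X → ℝ) : Prop :=
  u ∈ obstacleSet μ Ω ψ ∧
    ∀ v ∈ obstacleSet μ Ω ψ, ∫ x, f x * (v x - u x) ∂μ ≤ nonlocalForm μ γ u (v - u)

structure IsRowBoundedKernel (μ : Measure X) (γ : X → X → ℝ) : Prop where
  measurable : Measurable (Function.uncurry γ)
  nonneg : ∀ x y, 0 ≤ γ x y
  exists_ae_lintegral_le : ∃ C ≠ ∞, ∀ᵐ x ∂μ, ∫⁻ y, ENNReal.ofReal (γ x y) ∂μ ≤ C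

theorem isRowBoundedKernel_of_ae_lintegral_sq_le [IsFiniteMeasure μ]
    (hγ : Measurable (Function.uncurry γ)) (hγ0 : ∀ x y, 0 ≤ γ x y) {B : ℝ≥0∞} (hB : B ≠ ∞)
    (h : ∀ᵐ x ∂μ, ∫⁻ y, ENNReal.ofReal (γ x y ^ 2) ∂μ ≤ B) : IsRowBoundedKernel μ γ := by
  refine ⟨hγ, hγ0, B + μ Set.univ, ENNReal.add_ne_top.2 ⟨hB, measure_ne_top _ _⟩, ?_⟩
  filter_upwards [h] with x hx
  calc ∫⁻ y, ENNReal.ofReal (γ x y) ∂μ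
      ≤ ∫⁻ y, (ENNReal.ofReal (γ x y ^ 2) + 1) ∂μ := lintegral_mono fun y => by
        rw [← ENNReal.ofReal_one, ← ENNReal.ofReal_add (sq_nonneg _) zero_le_one]
        exact ENNReal.ofReal_le_ofReal (by nlinarith [sq_nonneg (γ x y - 1)])
    _ = ∫⁻ y, ENNReal.ofReal (γ x y ^ 2) ∂μ + μ Set.univ := by
        rw [lintegral_add_right _ measurable_const, lintegral_one]
    _ ≤ B + μ Set.univ := by gcongr

theorem nonlocalOp_mul_eq (x : X) :
    nonlocalOp μ γ u x * φ x = 2 * ∫ y, (u x - u y) * φ x * γ x y ∂μ := by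
  simp only [nonlocalOp, mul_assoc, ← integral_mul_const]
  congr 2
  ext y
  ring

theorem nonlocalOp_le_of_contact {x : X} (hγ0 : ∀ y, 0 ≤ γ x y) (hψu : ψ ≤ᵐ[μ] u)
    (hx : u x = ψ x) (hu : Integrable (fun y => (u x - u y) * γ x y) μ)
    (hψ : Integrable (fun y => (ψ x - ψ y) * γ x y) μ) :
    nonlocalOp μ γ u x ≤ nonlocalOp μ γ ψ x := by
  refine mul_le_mul_of_nonneg_left (integral_mono_ae hu hψ ?_) zero_le_two
  filter_upwards [hψu] with y hy
  rw [hx]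
  exact mul_le_mul_of_nonneg_right (by linarith) (hγ0 y)

section SFinite

variable [SFinite μ]

theorem IsRowBoundedKernel.integrable_mul_fst (hγ : IsRowBoundedKernel μ γ)
    (hℓ : Integrable ℓ μ) : Integrable (fun q : X × X => ℓ q.1 * γ q.1 q.2) (μ.prod μ) := by
  obtain ⟨C, hC, hrow⟩ := hγ.exists_ae_lintegral_le
  have hm : AEStronglyMeasurable (fun q : X × X => ℓ q.1 * γ q.1 q.2) (μ.prod μ) :=
    hℓ.1.comp_fst.mul hγ.measurable.aestronglyMeasurable
  refine ⟨hm, ?_⟩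
  calc ∫⁻ q, ‖ℓ q.1 * γ q.1 q.2‖ₑ ∂μ.prod μ
      = ∫⁻ x, ‖ℓ x‖ₑ * ∫⁻ y, ENNReal.ofReal (γ x y) ∂μ ∂μ := by
        rw [lintegral_prod _ hm.enorm]
        refine lintegral_congr fun x => ?_
        simp only [enorm_mul, Real.enorm_of_nonneg (hγ.nonneg _ _)]
        exact lintegral_const_mul _ (hγ.measurable.comp measurable_prodMk_left).ennreal_ofReal
    _ ≤ ∫⁻ x, ‖ℓ x‖ₑ * C ∂μ := lintegral_mono_ae (hrow.mono fun x hx => by gcongr)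
    _ = (∫⁻ x, ‖ℓ x‖ₑ ∂μ) * C := lintegral_mul_const'' _ hℓ.1.enorm
    _ < ∞ := ENNReal.mul_lt_top hℓ.2 hC.lt_top

theorem IsRowBoundedKernel.integrable_mul_snd (hγ : IsRowBoundedKernel μ γ)
    (hsymm : ∀ x y, γ x y = γ y x) (hℓ : Integrable ℓ μ) :
    Integrable (fun q : X × X => ℓ q.2 * γ q.1 q.2) (μ.prod μ) :=
  (hγ.integrable_mul_fst hℓ).swap.congr (ae_of_all _ fun q => by simp [hsymm q.2 q.1])

theorem IsRowBoundedKernel.integrable_mul_mul (hγ : IsRowBoundedKernel μ γ)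
    (hsymm : ∀ x y, γ x y = γ y x) (hu : MemLp u 2 μ) (hφ : MemLp φ 2 μ) :
    Integrable (fun q : X × X => u q.1 * φ q.2 * γ q.1 q.2) (μ.prod μ) := by
  refine ((hγ.integrable_mul_fst hu.integrable_sq).add
    (hγ.integrable_mul_snd hsymm hφ.integrable_sq)).mono'
    ((hu.1.comp_fst.mul hφ.1.comp_snd).mul hγ.measurable.aestronglyMeasurable)
    (ae_of_all _ fun q => ?_)
  have hγq := hγ.nonneg q.1 q.2
  have hamgm : |u q.1| * |φ q.2| ≤ u q.1 ^ 2 + φ q.2 ^ 2 := by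
    nlinarith [two_mul_le_add_sq |u q.1| |φ q.2|, sq_abs (u q.1), sq_abs (φ q.2),
      abs_nonneg (u q.1), abs_nonneg (φ q.2)]
  rw [Pi.add_apply, Real.norm_eq_abs, abs_mul, abs_mul, abs_of_nonneg hγq, ← add_mul]
  exact mul_le_mul_of_nonneg_right hamgm hγq

theorem IsRowBoundedKernel.integrable_sub_mul (hγ : IsRowBoundedKernel μ γ)
    (hsymm : ∀ x y, γ x y = γ y x) (hu : Integrable u μ) :
    Integrable (fun q : X × X => (u q.1 - u q.2) * γ q.1 q.2) (μ.prod μ) := by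
  refine ((hγ.integrable_mul_fst hu).sub (hγ.integrable_mul_snd hsymm hu)).congr
    (ae_of_all _ fun q => ?_)
  simp only [Pi.sub_apply]
  ring

theorem IsRowBoundedKernel.integrable_sub_mul_mul (hγ : IsRowBoundedKernel μ γ)
    (hsymm : ∀ x y, γ x y = γ y x) (hu : MemLp u 2 μ) (hφ : MemLp φ 2 μ) :
    Integrable (fun q : X × X => (u q.1 - u q.2) * φ q.1 * γ q.1 q.2) (μ.prod μ) := by
  refine ((hγ.integrable_mul_fst (hu.integrable_mul hφ)).sub
    (hγ.integrable_mul_mul hsymm hφ hu)).congr (ae_of_all _ fun q => ?_)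
  simp only [Pi.sub_apply, Pi.mul_apply]
  ring

theorem IsRowBoundedKernel.integrable_nonlocalOp (hγ : IsRowBoundedKernel μ γ)
    (hsymm : ∀ x y, γ x y = γ y x) (hu : Integrable u μ) : Integrable (nonlocalOp μ γ u) μ :=
  (hγ.integrable_sub_mul hsymm hu).integral_prod_left.const_mul 2

theorem IsRowBoundedKernel.integrable_nonlocalOp_mul (hγ : IsRowBoundedKernel μ γ)
    (hsymm : ∀ x y, γ x y = γ y x) (hu : MemLp u 2 μ) (hφ : MemLp φ 2 μ) :
    Integrable (fun x => nonlocalOp μ γ u x * φ x) μ := by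
  simpa only [nonlocalOp_mul_eq] using
    (hγ.integrable_sub_mul_mul hsymm hu hφ).integral_prod_left.const_mul 2

theorem IsRowBoundedKernel.nonlocalForm_eq_integral (hγ : IsRowBoundedKernel μ γ)
    (hsymm : ∀ x y, γ x y = γ y x) (hu : MemLp u 2 μ) (hφ : MemLp φ 2 μ) :
    nonlocalForm μ γ u φ = ∫ x, nonlocalOp μ γ u x * φ x ∂μ := by
  set G : X × X → ℝ := fun q => (u q.1 - u q.2) * φ q.1 * γ q.1 q.2
  have hG : Integrable G (μ.prod μ) := hγ.integrable_sub_mul_mul hsymm hu hφ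
  have hGswap : Integrable (fun q => G q.swap) (μ.prod μ) := hG.swap
  have hsplit : (fun q : X × X => (u q.1 - u q.2) * (φ q.1 - φ q.2) * γ q.1 q.2) =
      fun q => G q + G q.swap := by
    ext q
    simp only [G, Prod.fst_swap, Prod.snd_swap, hsymm q.2 q.1]
    ring
  calc nonlocalForm μ γ u φ = ∫ q, (G q + G q.swap) ∂μ.prod μ := by
        rw [← hsplit, integral_prod _ (hsplit ▸ hG.add hGswap)]
        rfl
    _ = 2 * ∫ q, G q ∂μ.prod μ := by
        rw [integral_add hG hGswap, integral_prod_swap]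
        ring
    _ = ∫ x, nonlocalOp μ γ u x * φ x ∂μ := by
        rw [integral_prod _ hG, ← integral_const_mul]
        simp only [nonlocalOp_mul_eq, G]

theorem IsRowBoundedKernel.ae_integrable_slice (hγ : IsRowBoundedKernel μ γ)
    (hsymm : ∀ x y, γ x y = γ y x) (hu : Integrable u μ) :
    ∀ᵐ x ∂μ, Integrable (fun y => (u x - u y) * γ x y) μ :=
  (hγ.integrable_sub_mul hsymm hu).prod_right_ae

theorem IsRowBoundedKernel.multiplier_integrable_and_nonneg (hγ : IsRowBoundedKernel μ γ)
    (hsymm : ∀ x y, γ x y = γ y x) (hf : MemLp f 2 μ)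
    (hu : MemLp u 2 μ) {v : X → ℝ} (hv : MemLp v 2 μ)
    (hvi : ∫ x, f x * (v x - u x) ∂μ ≤ nonlocalForm μ γ u (v - u)) :
    Integrable (fun x => (nonlocalOp μ γ u x - f x) * (v x - u x)) μ ∧
      0 ≤ ∫ x, (nonlocalOp μ γ u x - f x) * (v x - u x) ∂μ := by
  have hφ : MemLp (v - u) 2 μ := hv.sub hu
  have hLu : Integrable (fun x => nonlocalOp μ γ u x * (v x - u x)) μ :=
    hγ.integrable_nonlocalOp_mul hsymm hu hφ
  have hfφ : Integrable (fun x => f x * (v x - u x)) μ := hf.integrable_mul hφ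
  rw [hγ.nonlocalForm_eq_integral hsymm hu hφ] at hvi
  simp only [sub_mul]
  refine ⟨hLu.sub hfφ, ?_⟩
  rw [integral_sub hLu hfφ]
  exact sub_nonneg.2 hvi

end SFinite

theorem ae_restrict_nonneg_of_forall_obstacleSet [IsFiniteMeasure μ] (hΩ : MeasurableSet Ω)
    (hℓ : Integrable ℓ μ) (hu : u ∈ obstacleSet μ Ω ψ)
    (h : ∀ v ∈ obstacleSet μ Ω ψ, 0 ≤ ∫ x, ℓ x * (v x - u x) ∂μ) : 0 ≤ᵐ[μ.restrict Ω] ℓ := by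
  refine ae_nonneg_of_forall_setIntegral_nonneg hℓ.restrict fun s hs _ => ?_
  rw [Measure.restrict_restrict hs]
  set E := s ∩ Ω
  have hE : MeasurableSet E := hs.inter hΩ
  have hv : u + E.indicator (fun _ => 1) ∈ obstacleSet μ Ω ψ := by
    refine ⟨hu.1.add (memLp_indicator_const 2 hE 1 (Or.inr (measure_ne_top μ E))), ?_, ?_⟩
    · filter_upwards [hu.2.1, ae_restrict_mem hΩ.compl] with x hx hxΩ
      simp [hx, Set.indicator_of_notMem (fun h : x ∈ E => hxΩ h.2)]
    · filter_upwards [hu.2.2] with x hx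
      have : (0 : ℝ) ≤ E.indicator (fun _ => 1) x :=
        Set.indicator_nonneg (fun _ _ => zero_le_one) x
      simp only [Pi.add_apply]
      linarith
  rw [← integral_indicator hE]
  convert h _ hv using 3 with x
  by_cases hx : x ∈ E <;> simp [hx]

theorem ae_restrict_mul_eq_zero_of_forall_obstacleSet (hΩ : MeasurableSet Ω)
    (hψ : MemLp ψ 2 μ) (hu : u ∈ obstacleSet μ Ω ψ) (hℓ : 0 ≤ᵐ[μ.restrict Ω] ℓ)
    (h : ∀ v ∈ obstacleSet μ Ω ψ,
      Integrable (fun x => ℓ x * (v x - u x)) μ ∧ 0 ≤ ∫ x, ℓ x * (v x - u x) ∂μ) :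
    ∀ᵐ x ∂μ.restrict Ω, ℓ x * (ψ x - u x) = 0 := by
  have hv : Ω.indicator ψ ∈ obstacleSet μ Ω ψ :=
    ⟨hψ.indicator hΩ, (ae_restrict_mem hΩ.compl).mono fun x hx => Set.indicator_of_notMem hx _,
      (ae_restrict_mem hΩ).mono fun x hx => (Set.indicator_of_mem hx _).ge⟩
  obtain ⟨hint, hnonneg⟩ := h _ hv
  have hnonpos : 0 ≤ᵐ[μ] fun x => -(ℓ x * (Ω.indicator ψ x - u x)) := by
    refine ae_of_ae_restrict_of_ae_restrict_compl Ω ?_ ?_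
    · filter_upwards [hℓ, hu.2.2, ae_restrict_mem hΩ] with x hℓx hx hxΩ
      rw [Set.indicator_of_mem hxΩ, Pi.zero_apply, neg_nonneg]
      exact mul_nonpos_of_nonneg_of_nonpos hℓx (by linarith)
    · filter_upwards [hu.2.1, ae_restrict_mem hΩ.compl] with x hx hxΩ
      simp [Set.indicator_of_notMem hxΩ, hx]
  have hzero := (integral_eq_zero_iff_of_nonneg_ae hnonpos hint.neg).1 <|
    le_antisymm (by rw [integral_neg]; linarith) (integral_nonneg_of_ae hnonpos)
  filter_upwards [ae_restrict_of_ae hzero, ae_restrict_mem hΩ] with x hx hxΩ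
  simpa [Set.indicator_of_mem hxΩ] using hx

theorem IsObstacleSolution.ae_nonneg_and_le_max [IsFiniteMeasure μ]
    (hsol : IsObstacleSolution μ γ Ω ψ f u) (hΩ : MeasurableSet Ω) (hγ : IsRowBoundedKernel μ γ)
    (hsymm : ∀ x y, γ x y = γ y x) (hf : MemLp f 2 μ) (hψ : MemLp ψ 2 μ)
    (hψ0 : ∀ᵐ x ∂μ.restrict Ωᶜ, ψ x ≤ 0) :
    ∀ᵐ x ∂μ.restrict Ω, 0 ≤ nonlocalOp μ γ u x - f x ∧
      nonlocalOp μ γ u x - f x ≤ max (nonlocalOp μ γ ψ x - f x) 0 := by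
  obtain ⟨hu, hvi⟩ := hsol
  have hmult v (hv : v ∈ obstacleSet μ Ω ψ) :=
    hγ.multiplier_integrable_and_nonneg hsymm hf hu.1 hv.1 (hvi v hv)
  have hsign := ae_restrict_nonneg_of_forall_obstacleSet hΩ
    ((hγ.integrable_nonlocalOp hsymm (hu.1.integrable one_le_two)).sub (hf.integrable one_le_two))
    hu fun v hv => (hmult v hv).2
  have hcompl := ae_restrict_mul_eq_zero_of_forall_obstacleSet hΩ hψ hu hsign hmult
  have hψu : ψ ≤ᵐ[μ] u := by
    refine ae_of_ae_restrict_of_ae_restrict_compl Ω hu.2.2 ?_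
    filter_upwards [hψ0, hu.2.1] with x hψx hux
    rwa [hux]
  filter_upwards [hsign, hcompl,
    ae_restrict_of_ae (hγ.ae_integrable_slice hsymm (hu.1.integrable one_le_two)),
    ae_restrict_of_ae (hγ.ae_integrable_slice hsymm (hψ.integrable one_le_two))]
    with x hx₀ hx hux hψx
  refine ⟨hx₀, ?_⟩
  rcases mul_eq_zero.1 hx with hzero | hcontact
  · exact hzero.le.trans (le_max_right _ _)
  · refine le_max_of_le_left (sub_le_sub_right ?_ _)
    exact nonlocalOp_le_of_contact (hγ.nonneg x) hψu (sub_eq_zero.1 hcontact).symm hux hψx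

end NonlocalObstacle

end

theorem lewy_stampacchia_estimate_general
    (n : ℕ) (D Ω : Set (EuclideanSpace ℝ (Fin n)))
    (hDbdd : Bornology.IsBounded D)
    (hΩ : MeasurableSet Ω) (hΩD : Ω ⊆ D)
    (γ : EuclideanSpace ℝ (Fin n) → EuclideanSpace ℝ (Fin n) → ℝ)
    (hγmeas : Measurable
      fun p : EuclideanSpace ℝ (Fin n) × EuclideanSpace ℝ (Fin n) => γ p.1 p.2)
    (hγsymm : ∀ x y, γ x y = γ y x) (hγnn : ∀ x y, 0 ≤ γ x y)
    (γ₄ : ℝ)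
    (hγL2 : ∀ᵐ x ∂(volume.restrict D),
      ∫⁻ y in D, ENNReal.ofReal ((γ x y) ^ 2) ≤ ENNReal.ofReal (γ₄ ^ 2))
    (f ψ : EuclideanSpace ℝ (Fin n) → ℝ)
    (hf : MemLp f 2 (volume.restrict D)) (hψ : MemLp ψ 2 (volume.restrict D))
    (hψ0 : ∀ᵐ x ∂(volume.restrict (D \ Ω)), ψ x ≤ 0)
    (u : EuclideanSpace ℝ (Fin n) → ℝ) (hu : MemLp u 2 (volume.restrict D))
    (hu0 : ∀ᵐ x ∂(volume.restrict (D \ Ω)), u x = 0)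
    (huK : ∀ᵐ x ∂(volume.restrict Ω), ψ x ≤ u x)
    (hvi : ∀ v : EuclideanSpace ℝ (Fin n) → ℝ,
      MemLp v 2 (volume.restrict D) →
      (∀ᵐ x ∂(volume.restrict (D \ Ω)), v x = 0) →
      (∀ᵐ x ∂(volume.restrict Ω), ψ x ≤ v x) →
      ∫ x in D, f x * (v x - u x)
        ≤ ∫ x in D, ∫ y in D, (u x - u y) * ((v x - u x) - (v y - u y)) * γ x y) :
    ∀ᵐ x ∂(volume.restrict Ω),
      0 ≤ (2 * ∫ y in D, (u x - u y) * γ x y) - f x ∧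
      (2 * ∫ y in D, (u x - u y) * γ x y) - f x
        ≤ max ((2 * ∫ y in D, (ψ x - ψ y) * γ x y) - f x) 0 := by
  set μ := volume.restrict D
  have : IsFiniteMeasure μ := isFiniteMeasure_restrict.2 hDbdd.measure_lt_top.ne
  have hμΩ : volume.restrict Ω = μ.restrict Ω := by
    rw [Measure.restrict_restrict hΩ, Set.inter_eq_left.2 hΩD]
  have hμΩc : volume.restrict (D \ Ω) = μ.restrict Ωᶜ := by
    rw [Measure.restrict_restrict hΩ.compl, Set.inter_comm, Set.sdiff_eq]
  rw [hμΩc] at hψ0 hu0 hvi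
  rw [hμΩ] at huK hvi ⊢
  have hγ : NonlocalObstacle.IsRowBoundedKernel μ γ :=
    NonlocalObstacle.isRowBoundedKernel_of_ae_lintegral_sq_le hγmeas hγnn
      ENNReal.ofReal_ne_top hγL2
  exact NonlocalObstacle.IsObstacleSolution.ae_nonneg_and_le_max
    ⟨⟨hu, hu0, huK⟩, fun v hv => hvi v hv.1 hv.2.1 hv.2.2⟩ hΩ hγ hγsymm hf hψ hψ0

/-- Theorem 4.4 (Lewy–Stampacchia dual estimates) for square-integrable kernels
(Case 2): if `u` solves the nonlocal obstacle variational inequality over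
`K = {v ∈ L²(D) : v = 0 a.e. on D∖Ω, v ≥ ψ a.e. on Ω}`, then a.e. on `Ω` the
Lagrange multiplier `λ = -Lu - f` satisfies `0 ≤ λ ≤ (-Lψ - f)⁺`, where
`(-Lw)(x) = 2∫_D (w(x) - w(y)) γ(x,y) dy`. -/
theorem lewy_stampacchia_estimate
    (n : ℕ) (D Ω : Set (EuclideanSpace ℝ (Fin n)))
    (hD : MeasurableSet D) (hDbdd : Bornology.IsBounded D)
    (hΩ : MeasurableSet Ω) (hΩD : Ω ⊆ D)
    (γ : EuclideanSpace ℝ (Fin n) → EuclideanSpace ℝ (Fin n) → ℝ)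
    (hγmeas : Measurable
      fun p : EuclideanSpace ℝ (Fin n) × EuclideanSpace ℝ (Fin n) => γ p.1 p.2)
    (hγsymm : ∀ x y, γ x y = γ y x) (hγnn : ∀ x y, 0 ≤ γ x y)
    (γ₄ : ℝ) (hγ₄ : 0 < γ₄)
    (hγL2 : ∀ᵐ x ∂(volume.restrict D),
      ∫⁻ y in D, ENNReal.ofReal ((γ x y) ^ 2) ≤ ENNReal.ofReal (γ₄ ^ 2))
    (α : ℝ) (hα : 0 < α)
    (hcoercive : ∀ w : EuclideanSpace ℝ (Fin n) → ℝ,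
      MemLp w 2 (volume.restrict D) →
      (∀ᵐ x ∂(volume.restrict (D \ Ω)), w x = 0) →
      α * ∫ x in D, (w x) ^ 2
        ≤ ∫ x in D, ∫ y in D, (w x - w y) * (w x - w y) * γ x y)
    (f ψ : EuclideanSpace ℝ (Fin n) → ℝ)
    (hf : MemLp f 2 (volume.restrict D)) (hψ : MemLp ψ 2 (volume.restrict D))
    (hψ0 : ∀ᵐ x ∂(volume.restrict (D \ Ω)), ψ x ≤ 0)
    (u : EuclideanSpace ℝ (Fin n) → ℝ) (hu : MemLp u 2 (volume.restrict D))
    (hu0 : ∀ᵐ x ∂(volume.restrict (D \ Ω)), u x = 0)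
    (huK : ∀ᵐ x ∂(volume.restrict Ω), ψ x ≤ u x)
    (hvi : ∀ v : EuclideanSpace ℝ (Fin n) → ℝ,
      MemLp v 2 (volume.restrict D) →
      (∀ᵐ x ∂(volume.restrict (D \ Ω)), v x = 0) →
      (∀ᵐ x ∂(volume.restrict Ω), ψ x ≤ v x) →
      ∫ x in D, f x * (v x - u x)
        ≤ ∫ x in D, ∫ y in D, (u x - u y) * ((v x - u x) - (v y - u y)) * γ x y) :
    ∀ᵐ x ∂(volume.restrict Ω),
      0 ≤ (2 * ∫ y in D, (u x - u y) * γ x y) - f x ∧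
      (2 * ∫ y in D, (u x - u y) * γ x y) - f x
        ≤ max ((2 * ∫ y in D, (ψ x - ψ y) * γ x y) - f x) 0 :=
  lewy_stampacchia_estimate_general n D Ω hDbdd hΩ hΩD γ hγmeas hγsymm hγnn γ₄ hγL2 f ψ hf hψ hψ0 u
    hu hu0 huK hvi
end
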